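/- arXiv:1606.06464 — 2 statements merged into one kernel-verified Lean document; each statement's English description precedes it below -/
import Mathlib

section
/- Let λ ∈ (0,1), a = (1-λ)²/(2λ), b = (3λ-1)/(2λ), K > 1 and B ∈ (0,1) with B ≤ K²/(4(a+b)²). Then for all ξ ∈ [1, K/√B], the function ψ(ξ) = ξ(ξ-b)/(ξ-a-b) satisfies ψ(ξ) ≤ max{1/λ, 2K/√B}. -/
/-- Let λ ∈ (0,1), a = (1-λ)²/(2λ), b = (3λ-1)/(2λ), K > 1 and B ∈ (0,1) with
B ≤ K²/(4(a+b)²). Then for all ξ ∈ [1, K/√B], the function ψ(ξ) = ξ(ξ-b)/(ξ-a-b)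
satisfies ψ(ξ) ≤ max{1/λ, 2K/√B}. -/
theorem stmt_7 (l a b K B : ℝ) (hl : l ∈ Set.Ioo (0:ℝ) 1)
    (ha : a = (1 - l)^2 / (2*l)) (hb : b = (3*l - 1) / (2*l))
    (hK : 1 < K) (hB : B ∈ Set.Ioo (0:ℝ) 1)
    (hBK : B ≤ K^2 / (4 * (a + b)^2)) :
    ∀ ξ ∈ Set.Icc (1:ℝ) (K / Real.sqrt B),
      ξ * (ξ - b) / (ξ - a - b) ≤ max (1 / l) (2 * K / Real.sqrt B) := by
  obtain ⟨hl0, hl1⟩ := hl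
  obtain ⟨hB0, hB1⟩ := hB
  intro ξ hξ
  obtain ⟨hξ1, hξ2⟩ := hξ
  have hs : 0 < Real.sqrt B := Real.sqrt_pos.mpr hB0
  have hlne : l ≠ 0 := ne_of_gt hl0
  have hab : a + b = (l + 1) / 2 := by
    rw [ha, hb]; field_simp; ring
  have hden : 0 < ξ - a - b := by
    have : a + b < 1 := by rw [hab]; linarith
    linarith
  rcases le_or_gt (2 * a + b) ξ with h | h
  · have hξpos : (0:ℝ) < ξ := by linarith
    have h1 : ξ * (ξ - b) / (ξ - a - b) ≤ 2 * ξ := by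
      rw [div_le_iff₀ hden]
      nlinarith
    have h2 : 2 * ξ ≤ 2 * K / Real.sqrt B := by
      rw [mul_div_assoc]; linarith
    exact le_trans (h1.trans h2) (le_max_right _ _)
  · have key : ξ * (ξ - b) / (ξ - a - b) ≤ 1 / l := by
      rw [div_le_div_iff₀ hden hl0]
      have ha2 : 2 * l * a = (1 - l) ^ 2 := by rw [ha]; field_simp
      have hb2 : 2 * l * b = 3 * l - 1 := by rw [hb]; field_simp
      have h2 : l * ξ ≤ (2 * l ^ 2 - l + 1) / 2 := by
        nlinarith [mul_lt_mul_of_pos_left h hl0]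
      have h3 : (0:ℝ) ≤ (l + 1) / 2 - l * ξ := by
        nlinarith [mul_pos hl0 (by linarith : (0:ℝ) < 1 - l)]
      nlinarith [mul_nonneg (sub_nonneg.mpr hξ1) h3, hab, sq_nonneg (1 - l)]
    exact key.trans (le_max_left _ _)
end

section
/- Let n ≥ 1, λ ∈ (0,1), B ∈ (0,1) and ξ ∈ (0,1). With φ'(ξ) = 2λξ and φ''(ξ) = 2λ, the quantity J₁ := n²·ξ^(2-2/n)·φ''(ξ) / √(B^(4/n-2)·φ'(ξ)² + n²·B^(2/n-2)·ξ^(2-2/n)·φ''(ξ)²) satisfies J₁ ≥ (n/2)·B^(1-1/n)·ξ^(1-1/n). -/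
set_option maxHeartbeats 800000 in
/-- For n ≥ 1, λ ∈ (0,1), B ∈ (0,1), ξ ∈ (0,1), with φ'(ξ) = 2λξ and φ''(ξ) = 2λ,
the quantity J₁ = n²ξ^(2-2/n)φ''(ξ) / √(B^(4/n-2)φ'(ξ)² + n²B^(2/n-2)ξ^(2-2/n)φ''(ξ)²)
satisfies J₁ ≥ (n/2)·B^(1-1/n)·ξ^(1-1/n). -/
theorem stmt_10 (n : ℕ) (hn : 1 ≤ n) (l B ξ : ℝ) (hl : l ∈ Set.Ioo (0:ℝ) 1)
    (hB : B ∈ Set.Ioo (0:ℝ) 1) (hξ : ξ ∈ Set.Ioo (0:ℝ) 1)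
    (φ' φ'' : ℝ) (hφ' : φ' = 2 * l * ξ) (hφ'' : φ'' = 2 * l) :
    (n:ℝ)^2 * ξ ^ ((2:ℝ) - 2/n) * φ'' /
        Real.sqrt (B ^ ((4:ℝ)/n - 2) * φ'^2
          + (n:ℝ)^2 * B ^ ((2:ℝ)/n - 2) * ξ ^ ((2:ℝ) - 2/n) * φ''^2)
      ≥ ((n:ℝ) / 2) * B ^ ((1:ℝ) - 1/n) * ξ ^ ((1:ℝ) - 1/n) := by
  obtain ⟨hl0, hl1⟩ := hl
  obtain ⟨hB0, hB1⟩ := hB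
  obtain ⟨hξ0, hξ1⟩ := hξ
  subst hφ' hφ''
  have hn1 : (1:ℝ) ≤ (n:ℝ) := by exact_mod_cast hn
  have hn0 : (0:ℝ) < n := by linarith
  -- abbreviations
  set p := B ^ ((1:ℝ)/n - 1) with hp
  set q := ξ ^ ((1:ℝ) - 1/n) with hq
  have hp0 : 0 < p := Real.rpow_pos_of_pos hB0 _
  have hq0 : 0 < q := Real.rpow_pos_of_pos hξ0 _
  have hpp : p * p = B ^ ((2:ℝ)/n - 2) := by
    rw [hp, ← Real.rpow_add hB0]; ring_nf
  have hqq : q * q = ξ ^ ((2:ℝ) - 2/n) := by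
    rw [hq, ← Real.rpow_add hξ0]; ring_nf
  have hPinv : B ^ ((1:ℝ) - 1/n) * p = 1 := by
    rw [hp, ← Real.rpow_add hB0]; norm_num
  -- key bound B^(4/n-2) * ξ^2 ≤ B^(2/n-2) * ξ^(2-2/n)
  have hkey : B ^ ((4:ℝ)/n - 2) * ξ ^ (2:ℕ) ≤ B ^ ((2:ℝ)/n - 2) * ξ ^ ((2:ℝ) - 2/n) := by
    have h1 : B ^ ((4:ℝ)/n - 2) = B ^ ((2:ℝ)/n - 2) * B ^ ((2:ℝ)/n) := by
      rw [← Real.rpow_add hB0]; ring_nf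
    have h2 : (ξ:ℝ) ^ (2:ℕ) = ξ ^ ((2:ℝ) - 2/n) * ξ ^ ((2:ℝ)/n) := by
      rw [← Real.rpow_add hξ0, ← Real.rpow_natCast ξ 2]
      norm_num
    have h3 : B ^ ((2:ℝ)/n) ≤ 1 :=
      Real.rpow_le_one hB0.le hB1.le (by positivity)
    have h4 : ξ ^ ((2:ℝ)/n) ≤ 1 :=
      Real.rpow_le_one hξ0.le hξ1.le (by positivity)
    have hb2 : 0 < B ^ ((2:ℝ)/n - 2) := Real.rpow_pos_of_pos hB0 _
    have hx2 : 0 < ξ ^ ((2:ℝ) - 2/n) := Real.rpow_pos_of_pos hξ0 _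
    have hb3 : 0 < B ^ ((2:ℝ)/n) := Real.rpow_pos_of_pos hB0 _
    rw [h1, h2]
    have hx3 : (0:ℝ) ≤ ξ ^ ((2:ℝ)/n) := (Real.rpow_pos_of_pos hξ0 _).le
    calc B ^ ((2:ℝ)/n - 2) * B ^ ((2:ℝ)/n) * (ξ ^ ((2:ℝ) - 2/n) * ξ ^ ((2:ℝ)/n))
        = (B ^ ((2:ℝ)/n - 2) * ξ ^ ((2:ℝ) - 2/n)) * (B ^ ((2:ℝ)/n) * ξ ^ ((2:ℝ)/n)) := by
          ring
      _ ≤ (B ^ ((2:ℝ)/n - 2) * ξ ^ ((2:ℝ) - 2/n)) * 1 := by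
          apply mul_le_mul_of_nonneg_left _ (by positivity)
          exact mul_le_one₀ h3 hx3 h4
      _ = B ^ ((2:ℝ)/n - 2) * ξ ^ ((2:ℝ) - 2/n) := mul_one _
    
  set M := Real.sqrt (1 + (n:ℝ)^2) * p * q * (2*l) with hM
  have hM0 : 0 < M := by
    have : 0 < Real.sqrt (1 + (n:ℝ)^2) := Real.sqrt_pos.mpr (by positivity)
    positivity
  set S := B ^ ((4:ℝ)/n - 2) * (2*l*ξ)^2
      + (n:ℝ)^2 * B ^ ((2:ℝ)/n - 2) * ξ ^ ((2:ℝ) - 2/n) * (2*l)^2 with hS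
  have hS0 : 0 < S := by
    have h1 : 0 < B ^ ((4:ℝ)/n - 2) := Real.rpow_pos_of_pos hB0 _
    have h2 : 0 < B ^ ((2:ℝ)/n - 2) := Real.rpow_pos_of_pos hB0 _
    have h3 : 0 < ξ ^ ((2:ℝ) - 2/n) := Real.rpow_pos_of_pos hξ0 _
    positivity
  have hSM : S ≤ M^2 := by
    have hsq : Real.sqrt (1 + (n:ℝ)^2) ^ 2 = 1 + (n:ℝ)^2 :=
      Real.sq_sqrt (by positivity)
    have hM2 : M^2 = Real.sqrt (1 + (n:ℝ)^2)^2 * (p*p) * (q*q) * (2*l)^2 := by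
      rw [hM]; ring
    rw [hM2, hsq, hpp, hqq, hS]
    have hb2 : 0 < B ^ ((2:ℝ)/n - 2) := Real.rpow_pos_of_pos hB0 _
    have hx2 : 0 < ξ ^ ((2:ℝ) - 2/n) := Real.rpow_pos_of_pos hξ0 _
    have h5 := mul_le_mul_of_nonneg_right hkey (sq_nonneg (2*l))
    nlinarith [h5, mul_pos hb2 hx2]
  have hsqrtSM : Real.sqrt S ≤ M :=
    (Real.sqrt_le_sqrt hSM).trans_eq (Real.sqrt_sq hM0.le)
  rw [ge_iff_le, le_div_iff₀ (Real.sqrt_pos.mpr hS0)]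
  have hc0 : 0 ≤ (n:ℝ)/2 * B ^ ((1:ℝ) - 1/n) * q := by positivity
  calc (n:ℝ)/2 * B ^ ((1:ℝ) - 1/n) * q * Real.sqrt S
      ≤ (n:ℝ)/2 * B ^ ((1:ℝ) - 1/n) * q * M := by
        exact mul_le_mul_of_nonneg_left hsqrtSM hc0
    _ ≤ (n:ℝ)^2 * ξ ^ ((2:ℝ) - 2/n) * (2*l) := by
        have hs : Real.sqrt (1 + (n:ℝ)^2) ≤ 2*n := by
          have h : (1 + (n:ℝ)^2) ≤ (2*n)^2 := by nlinarith
          calc Real.sqrt (1 + (n:ℝ)^2) ≤ Real.sqrt ((2*n)^2) := Real.sqrt_le_sqrt h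
            _ = 2*n := Real.sqrt_sq (by positivity)
        have hexp : (n:ℝ)/2 * B ^ ((1:ℝ) - 1/n) * q * M
            = (n:ℝ) * Real.sqrt (1 + (n:ℝ)^2) * (q*q) * l
              * (B ^ ((1:ℝ) - 1/n) * p) := by rw [hM]; ring
        rw [hexp, hPinv, hqq, mul_one]
        have hx2 : 0 < ξ ^ ((2:ℝ) - 2/n) := Real.rpow_pos_of_pos hξ0 _
        have ht : 0 ≤ (n:ℝ) * (ξ ^ ((2:ℝ) - 2/n) * l) := by positivity
        nlinarith [mul_le_mul_of_nonneg_right hs ht]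
end
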